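/- arXiv:1307.7975 — 6 statements merged into one kernel-verified Lean document; each statement's English description precedes it below -/
import Mathlib

section
/- Let d ≥ 1 and let F : ℝ^d → ℝ be measurable. Suppose there exist a constant k ∈ ℝ, a vector ξ ∈ ℝ^d, and a symmetric positive definite d×d matrix Q such that F(α) ≤ k − (1/2)(α−ξ)ᵀQ(α−ξ) for all α ∈ ℝ^d. Let g(α) = N(α|μ*, Q*⁻¹) be a Gaussian density with μ* ∈ ℝ^d and Q* symmetric positive definite, and define the importance weight ω(α) = exp(F(α))/g(α). Let n > 0 be a real number. If Q* − n(Q* − Q) ≻ 0, then for every real m with 0 ≤ m ≤ n the integral ∫_{ℝ^d} ω(α)^m g(α) dα is finite. -/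
open MeasureTheory Matrix Filter

/-- The Gaussian density `N(·|μ, P⁻¹)` on `ℝ^d` with mean `μ` and precision matrix `P`. -/
noncomputable def gaussDensity {d : ℕ} (μ : Fin d → ℝ) (P : Matrix (Fin d) (Fin d) ℝ)
    (α : Fin d → ℝ) : ℝ :=
  (2 * Real.pi) ^ (-(d : ℝ) / 2) * Real.sqrt P.det *
    Real.exp (-(1 / 2) * ((α - μ) ⬝ᵥ P.mulVec (α - μ)))

/-! Writing `g = c * exp φ`, the integrand is `c ^ (1 - m) * exp (m F + (1 - m) φ)`.
Bounding `F` by its quadratic envelope turns the exponent into `-(1/2)` times the quadratic form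
of `m Q + (1 - m) Q* = Q* - m (Q* - Q)` plus an affine function. This matrix is positive definite
for every `m ∈ [0, n]`, because the positive definite cone is convex and the condition holds at
`m = 0` and `m = n`. A positive definite form dominates `ε ‖x‖²`, and the affine part is absorbed
by AM-GM, so the integrand is bounded by a multiple of an integrable isotropic Gaussian. -/

namespace Matrix

variable {ι : Type*}

lemma convex_setOf_posDef : Convex ℝ {A : Matrix ι ι ℝ | A.PosDef} := by
  intro A hA B hB a b ha hb _
  rcases ha.eq_or_lt with rfl | ha
  · simpa using hB.smul (by linarith : 0 < b)
  · exact (hA.smul ha).add_posSemidef (hB.posSemidef.smul hb)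

lemma PosDef.sub_smul_of_mem_Icc {A D : Matrix ι ι ℝ} (hA : A.PosDef) {n m : ℝ}
    (hn : (A - n • D).PosDef) (hm : m ∈ Set.Icc 0 n) : (A - m • D).PosDef := by
  have hconv : Convex ℝ {t : ℝ | (A - t • D).PosDef} := fun s hs t ht a b ha hb hab => by
    have hcomb : A - (a • s + b • t) • D = a • (A - s • D) + b • (A - t • D) := by
      conv_lhs => rw [← one_smul ℝ A, ← hab]
      module
    show (A - (a • s + b • t) • D).PosDef
    rw [hcomb]
    exact convex_setOf_posDef hs ht ha hb hab
  rw [← segment_eq_Icc (hm.1.trans hm.2)] at hm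
  exact hconv.segment_subset (by simpa using hA) hn hm

variable [Fintype ι]

lemma PosDef.exists_pos_mul_dotProduct_self_le {A : Matrix ι ι ℝ} (hA : A.PosDef) :
    ∃ ε > 0, ∀ x : ι → ℝ, ε * (x ⬝ᵥ x) ≤ x ⬝ᵥ A *ᵥ x := by
  rcases isEmpty_or_nonempty ι with hι | hι
  · exact ⟨1, one_pos, fun x => by simp [Subsingleton.elim x 0]⟩
  -- The Rayleigh quotient is scale invariant, so its minimum on the unit sphere bounds it.
  set R : (ι → ℝ) → ℝ := fun x => (x ⬝ᵥ A *ᵥ x) / (x ⬝ᵥ x)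
  have hR_smul (c : ℝ) (x : ι → ℝ) (hc : c ≠ 0) : R (c • x) = R x := by
    simp only [R, mulVec_smul, dotProduct_smul, smul_dotProduct, smul_eq_mul, ← mul_assoc]
    rw [mul_div_mul_left _ _ (mul_ne_zero hc hc)]
  have hself_pos {x : ι → ℝ} (hx : x ≠ 0) : 0 < x ⬝ᵥ x := by
    simpa using dotProduct_star_self_pos_iff.2 hx
  have hcont : ContinuousOn R (Metric.sphere 0 1) :=
    ContinuousOn.div (by fun_prop) (by fun_prop) fun x hx =>
      (hself_pos (ne_zero_of_mem_unit_sphere ⟨x, hx⟩)).ne'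
  obtain ⟨z, hz, hmin⟩ := (isCompact_sphere (0 : ι → ℝ) 1).exists_isMinOn
    (NormedSpace.sphere_nonempty.2 zero_le_one) hcont
  have hz0 : z ≠ 0 := ne_zero_of_mem_unit_sphere ⟨z, hz⟩
  refine ⟨R z, div_pos (hA.dotProduct_mulVec_pos hz0) (hself_pos hz0), fun x => ?_⟩
  rcases eq_or_ne x 0 with rfl | hx
  · simp
  have hRx : R z ≤ R x := by
    rw [← hR_smul ‖x‖⁻¹ x (by simpa using hx)]
    exact isMinOn_iff.1 hmin _ (by simp [norm_smul, hx])
  exact (le_div_iff₀ (hself_pos hx)).1 hRx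

lemma two_mul_dotProduct_le {ε : ℝ} (hε : 0 < ε) (b x : ι → ℝ) :
    2 * (b ⬝ᵥ x) ≤ ε * (x ⬝ᵥ x) + (b ⬝ᵥ b) / ε := by
  have hsq : 0 ≤ (ε • x - b) ⬝ᵥ (ε • x - b) := by
    simpa using dotProduct_star_self_nonneg (ε • x - b)
  simp only [dotProduct_sub, sub_dotProduct, dotProduct_smul, smul_dotProduct, smul_eq_mul,
    dotProduct_comm x b] at hsq
  refine le_of_mul_le_mul_left ?_ hε
  rw [mul_add, mul_div_cancel₀ _ hε.ne']
  linarith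

lemma dotProduct_mulVec_sub_sub {R : Type*} [CommRing R] (M : Matrix ι ι R) (x c : ι → R) :
    (x - c) ⬝ᵥ M *ᵥ (x - c) = x ⬝ᵥ M *ᵥ x - ((M + Mᵀ) *ᵥ c) ⬝ᵥ x + c ⬝ᵥ M *ᵥ c := by
  rw [add_mulVec, add_dotProduct, mulVec_transpose, ← dotProduct_mulVec, dotProduct_comm (M *ᵥ c)]
  simp only [mulVec_sub, dotProduct_sub, sub_dotProduct]
  ring

lemma integrable_exp_neg_mul_dotProduct_self {b : ℝ} (hb : 0 < b) :
    Integrable fun x : ι → ℝ => Real.exp (-b * (x ⬝ᵥ x)) := by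
  simp only [dotProduct, Finset.mul_sum, Real.exp_sum]
  exact Integrable.fintype_prod (f := fun _ t => Real.exp (-b * (t * t)))
    fun _ => by simpa [sq] using integrable_exp_neg_mul_sq hb

lemma integrable_exp_neg_half_dotProduct_mulVec_sub_add {B : Matrix ι ι ℝ} (hB : B.PosDef)
    (b : ι → ℝ) (c : ℝ) :
    Integrable fun x : ι → ℝ => Real.exp (-(1 / 2) * (x ⬝ᵥ B *ᵥ x - b ⬝ᵥ x + c)) := by
  obtain ⟨ε, hε, hεB⟩ := hB.exists_pos_mul_dotProduct_self_le
  refine ((integrable_exp_neg_mul_dotProduct_self (by positivity : 0 < ε / 4)).const_mul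
    (Real.exp (b ⬝ᵥ b / ε / 4 - c / 2))).mono' ?_ (Eventually.of_forall fun x => ?_)
  · fun_prop
  · rw [Real.norm_of_nonneg (Real.exp_nonneg _), ← Real.exp_add]
    gcongr
    linarith [hεB x, two_mul_dotProduct_le hε b x]

lemma exists_dotProduct_mulVec_sub_combination (P R : Matrix ι ι ℝ) (p r : ι → ℝ) (t : ℝ) :
    ∃ (b : ι → ℝ) (c : ℝ), ∀ x,
      t * ((x - p) ⬝ᵥ P *ᵥ (x - p)) + (1 - t) * ((x - r) ⬝ᵥ R *ᵥ (x - r))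
        = x ⬝ᵥ (R - t • (R - P)) *ᵥ x - b ⬝ᵥ x + c := by
  refine ⟨t • ((P + Pᵀ) *ᵥ p) + (1 - t) • ((R + Rᵀ) *ᵥ r),
    t * (p ⬝ᵥ P *ᵥ p) + (1 - t) * (r ⬝ᵥ R *ᵥ r), fun x => ?_⟩
  simp only [dotProduct_mulVec_sub_sub, sub_mulVec, smul_mulVec, dotProduct_sub, dotProduct_smul,
    add_dotProduct, smul_dotProduct, smul_eq_mul]
  ring

lemma integrable_exp_neg_half_dotProduct_mulVec_sub_combination {P R : Matrix ι ι ℝ} {t : ℝ}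
    (h : (R - t • (R - P)).PosDef) (p r : ι → ℝ) :
    Integrable fun x : ι → ℝ => Real.exp (-(1 / 2) *
      (t * ((x - p) ⬝ᵥ P *ᵥ (x - p)) + (1 - t) * ((x - r) ⬝ᵥ R *ᵥ (x - r)))) := by
  obtain ⟨b, c, hbc⟩ := exists_dotProduct_mulVec_sub_combination P R p r t
  simpa only [hbc] using integrable_exp_neg_half_dotProduct_mulVec_sub_add h b c

end Matrix

lemma Real.exp_div_mul_exp_rpow_mul {c : ℝ} (hc : 0 < c) (a t m : ℝ) :
    (exp a / (c * exp t)) ^ m * (c * exp t) = c ^ (1 - m) * exp (m * a + (1 - m) * t) := by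
  rw [mul_comm c, ← div_div, ← exp_sub, div_rpow (exp_nonneg _) hc.le, ← exp_mul,
    rpow_sub hc, rpow_one, show m * a + (1 - m) * t = (a - t) * m + t by ring, exp_add]
  ring

theorem stmt0_general (d : ℕ) (F : (Fin d → ℝ) → ℝ)
    (k : ℝ) (ξ : Fin d → ℝ) (Q : Matrix (Fin d) (Fin d) ℝ)
    (hbound : ∀ α, F α ≤ k - (1 / 2) * ((α - ξ) ⬝ᵥ Q.mulVec (α - ξ)))
    (μs : Fin d → ℝ) (Qs : Matrix (Fin d) (Fin d) ℝ) (hQs : Qs.PosDef)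
    (n : ℝ)
    (hpd : (Qs - n • (Qs - Q)).PosDef) :
    ∀ m : ℝ, 0 ≤ m → m ≤ n →
      ∫⁻ α, ENNReal.ofReal
        ((Real.exp (F α) / gaussDensity μs Qs α) ^ m * gaussDensity μs Qs α) < ⊤ := by
  intro m hm0 hmn
  obtain ⟨c, hc, hg⟩ : ∃ c > 0, ∀ α, gaussDensity μs Qs α
      = c * Real.exp (-(1 / 2) * ((α - μs) ⬝ᵥ Qs *ᵥ (α - μs))) :=
    ⟨_, mul_pos (by positivity) (Real.sqrt_pos.2 hQs.det_pos), fun _ => rfl⟩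
  have hint := (integrable_exp_neg_half_dotProduct_mulVec_sub_combination
    (hQs.sub_smul_of_mem_Icc hpd ⟨hm0, hmn⟩) ξ μs).const_mul (c ^ (1 - m) * Real.exp (m * k))
  refine (lintegral_mono fun α => ENNReal.ofReal_le_ofReal ?_).trans_lt hint.lintegral_lt_top
  rw [hg, Real.exp_div_mul_exp_rpow_mul hc, mul_assoc, ← Real.exp_add]
  refine mul_le_mul_of_nonneg_left (Real.exp_le_exp.2 ?_) (by positivity)
  linarith [mul_le_mul_of_nonneg_left (hbound α) hm0]

theorem stmt0 (d : ℕ) (hd : 1 ≤ d) (F : (Fin d → ℝ) → ℝ) (hF : Measurable F)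
    (k : ℝ) (ξ : Fin d → ℝ) (Q : Matrix (Fin d) (Fin d) ℝ) (hQ : Q.PosDef)
    (hbound : ∀ α, F α ≤ k - (1 / 2) * ((α - ξ) ⬝ᵥ Q.mulVec (α - ξ)))
    (μs : Fin d → ℝ) (Qs : Matrix (Fin d) (Fin d) ℝ) (hQs : Qs.PosDef)
    (n : ℝ) (hn : 0 < n)
    (hpd : (Qs - n • (Qs - Q)).PosDef) :
    ∀ m : ℝ, 0 ≤ m → m ≤ n →
      ∫⁻ α, ENNReal.ofReal
        ((Real.exp (F α) / gaussDensity μs Qs α) ^ m * gaussDensity μs Qs α) < ⊤ :=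
  stmt0_general d F k ξ Q hbound μs Qs hQs n hpd
end

section
/- Let d ≥ 1 and let l : ℝ^d → ℝ be measurable. Suppose there exist a constant k ∈ ℝ and a vector δ ∈ ℝ^d such that l(α) ≤ k + δᵀα for all α ∈ ℝ^d. Let p(α) = N(α|μ, Q⁻¹) with Q symmetric positive definite, let g(α) = N(α|μ*, Q*⁻¹) with Q* symmetric positive definite, and define the importance weight ω(α) = exp(l(α)) p(α) / g(α). Let n > 0 be a real number. If Q* − n(Q* − Q) ≻ 0, then for every real m with 0 ≤ m ≤ n the integral ∫_{ℝ^d} ω(α)^m g(α) dα is finite. -/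
/-! The weighted integrand is `C · exp(m l(α) + m u(α) + (1 - m) v(α))`, where `u`, `v` are the
Gaussian exponents of `p` and `g`. Since `l` grows at most linearly, the exponent is bounded by an
affine function minus `½ αᵀAα` with `A = m Q + (1 - m) Q* = Q* - m (Q* - Q)`. This `A` is a convex
combination of `Q*` and `Q* - n (Q* - Q)`, hence positive definite, so `αᵀAα ≥ c ∑ αᵢ²` for some
`c > 0` and the integrand is dominated by an integrable product of one-dimensional Gaussians. -/

open MeasureTheory Matrix Filter

theorem rpow_exp_mul_div_mul_exp_mul_eq {Z₁ Z₂ : ℝ} (hZ₁ : 0 ≤ Z₁) (hZ₂ : 0 < Z₂)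
    (f u v m : ℝ) :
    (Real.exp f * (Z₁ * Real.exp u) / (Z₂ * Real.exp v)) ^ m * (Z₂ * Real.exp v) =
      (Z₁ / Z₂) ^ m * Z₂ * Real.exp (m * (f + u) + (1 - m) * v) := by
  have hbase : Real.exp f * (Z₁ * Real.exp u) / (Z₂ * Real.exp v) =
      Z₁ / Z₂ * Real.exp (f + u - v) := by
    rw [Real.exp_sub, Real.exp_add]
    field_simp
  rw [hbase, Real.mul_rpow (by positivity) (Real.exp_nonneg _), ← Real.exp_mul,
    show m * (f + u) + (1 - m) * v = (f + u - v) * m + v by ring, Real.exp_add]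
  ring

namespace Matrix

variable {ι : Type*}

theorem PosDef.one_sub_smul_add_smul {A B : Matrix ι ι ℝ} (hA : A.PosDef) (hB : B.PosDef)
    {t : ℝ} (ht₀ : 0 ≤ t) (ht₁ : t ≤ 1) : ((1 - t) • A + t • B).PosDef := by
  rcases ht₀.eq_or_lt with rfl | ht₀
  · simpa using hA
  · exact PosDef.posSemidef_add (hA.posSemidef.smul (sub_nonneg.2 ht₁)) (hB.smul ht₀)

theorem PosDef.sub_smul_sub_of_le {P R : Matrix ι ι ℝ} (hP : P.PosDef) {n : ℝ} (hn : 0 < n)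
    (h : (P - n • (P - R)).PosDef) {m : ℝ} (hm : 0 ≤ m) (hmn : m ≤ n) :
    (P - m • (P - R)).PosDef := by
  convert hP.one_sub_smul_add_smul h (div_nonneg hm hn.le) ((div_le_one hn).2 hmn) using 1
  rw [smul_sub (m / n), smul_smul, div_mul_cancel₀ m hn.ne']
  module

variable [Fintype ι]

theorem sub_dotProduct_mulVec_sub (M : Matrix ι ι ℝ) (x ν : ι → ℝ) :
    (x - ν) ⬝ᵥ M *ᵥ (x - ν) = x ⬝ᵥ M *ᵥ x - (M *ᵥ ν + ν ᵥ* M) ⬝ᵥ x + ν ⬝ᵥ M *ᵥ ν := by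
  simp only [mulVec_sub, sub_dotProduct, dotProduct_sub, add_dotProduct]
  rw [dotProduct_comm (M *ᵥ ν), dotProduct_mulVec ν M x]
  ring

theorem PosDef.exists_pos_mul_sum_sq_le {A : Matrix ι ι ℝ} (hA : A.PosDef) :
    ∃ c > 0, ∀ x : ι → ℝ, c * ∑ i, x i ^ 2 ≤ x ⬝ᵥ A *ᵥ x := by
  let q : EuclideanSpace ℝ ι → ℝ := fun y => y.ofLp ⬝ᵥ A *ᵥ y.ofLp
  have hq : Continuous q := by
    simp only [q, dotProduct, mulVec]
    fun_prop
  obtain ⟨c, hc, hc_le⟩ : ∃ c > 0, ∀ y ∈ Metric.sphere (0 : EuclideanSpace ℝ ι) 1, c ≤ q y := by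
    rcases (Metric.sphere (0 : EuclideanSpace ℝ ι) 1).eq_empty_or_nonempty with h | h
    · exact ⟨1, one_pos, by simp [h]⟩
    · obtain ⟨y₀, hy₀, hmin⟩ := (isCompact_sphere _ _).exists_isMinOn h hq.continuousOn
      refine ⟨q y₀, ?_, fun y hy => hmin hy⟩
      have : y₀.ofLp ≠ 0 := by simpa using Metric.ne_of_mem_sphere hy₀ one_ne_zero
      simpa using hA.dotProduct_mulVec_pos this
  refine ⟨c, hc, fun x => ?_⟩
  rcases eq_or_ne x 0 with rfl | hx
  · simp
  set y : EuclideanSpace ℝ ι := WithLp.toLp 2 x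
  have hy : 0 < ‖y‖ := by simpa [y] using hx
  have h := hc_le (‖y‖⁻¹ • y) (by simp [norm_smul, hy.ne'])
  have hq_smul : q (‖y‖⁻¹ • y) = (‖y‖ ^ 2)⁻¹ * (x ⬝ᵥ A *ᵥ x) := by
    simp [q, y, mulVec_smul]
    ring
  have hnorm : ‖y‖ ^ 2 = ∑ i, x i ^ 2 := by
    simp [y, EuclideanSpace.norm_sq_eq]
  rw [hq_smul, le_inv_mul_iff₀ (by positivity), hnorm] at h
  linarith

end Matrix

section Integrability

variable {ι : Type*} [Fintype ι]

theorem integrable_exp_neg_mul_sum_sq_add {c : ℝ} (hc : 0 < c) (b : ι → ℝ) :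
    Integrable fun x : ι → ℝ => Real.exp (-c * ∑ i, x i ^ 2 + b ⬝ᵥ x) := by
  have := (GaussianFourier.integrable_cexp_neg_mul_sum_add (b := (c : ℂ)) (by simpa using hc)
    fun i => (b i : ℂ)).norm
  convert this using 2 with x
  rw [Complex.norm_exp]
  simp [dotProduct, Complex.re_sum, ← Complex.ofReal_pow]

theorem lintegral_ofReal_lt_top_of_le_mul_exp {A : Matrix ι ι ℝ} (hA : A.PosDef)
    {f : (ι → ℝ) → ℝ} {C : ℝ} (hC : 0 ≤ C) (b : ι → ℝ)
    (hf : ∀ x, f x ≤ C * Real.exp (b ⬝ᵥ x - (1 / 2) * (x ⬝ᵥ A *ᵥ x))) :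
    ∫⁻ x, ENNReal.ofReal (f x) < ⊤ := by
  obtain ⟨c, hc, hcA⟩ := hA.exists_pos_mul_sum_sq_le
  have hG := (integrable_exp_neg_mul_sum_sq_add (half_pos hc) b).const_mul C
  refine lt_of_le_of_lt (lintegral_mono fun x => ENNReal.ofReal_le_ofReal ?_) hG.lintegral_lt_top
  refine (hf x).trans (mul_le_mul_of_nonneg_left (Real.exp_le_exp.2 ?_) hC)
  nlinarith [hcA x]

theorem exists_le_affine_sub_half_dotProduct_mulVec {l : (ι → ℝ) → ℝ} {k : ℝ} {δ : ι → ℝ}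
    (hl : ∀ x, l x ≤ k + δ ⬝ᵥ x) (μ μs : ι → ℝ) (Q Qs : Matrix ι ι ℝ) {m : ℝ} (hm : 0 ≤ m) :
    ∃ (a : ℝ) (b : ι → ℝ), ∀ x, m * (l x + -(1 / 2) * ((x - μ) ⬝ᵥ Q *ᵥ (x - μ))) +
        (1 - m) * (-(1 / 2) * ((x - μs) ⬝ᵥ Qs *ᵥ (x - μs))) ≤
      a + b ⬝ᵥ x - (1 / 2) * (x ⬝ᵥ (Qs - m • (Qs - Q)) *ᵥ x) := by
  refine ⟨m * k - (1 / 2) * (m * (μ ⬝ᵥ Q *ᵥ μ) + (1 - m) * (μs ⬝ᵥ Qs *ᵥ μs)),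
    m • δ + (1 / 2 : ℝ) • (m • (Q *ᵥ μ + μ ᵥ* Q) + (1 - m) • (Qs *ᵥ μs + μs ᵥ* Qs)), fun x => ?_⟩
  have hlx := mul_le_mul_of_nonneg_left (hl x) hm
  simp only [sub_dotProduct_mulVec_sub, sub_mulVec, smul_mulVec, dotProduct_sub, dotProduct_smul,
    add_dotProduct, smul_dotProduct, smul_eq_mul] at hlx ⊢
  linarith

end Integrability

theorem stmt1_general (d : ℕ) (l : (Fin d → ℝ) → ℝ)
    (k : ℝ) (δ : Fin d → ℝ) (hbound : ∀ α, l α ≤ k + δ ⬝ᵥ α)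
    (μ μs : Fin d → ℝ) (Q Qs : Matrix (Fin d) (Fin d) ℝ)
    (hQs : Qs.PosDef)
    (n : ℝ) (hn : 0 < n)
    (hpd : (Qs - n • (Qs - Q)).PosDef) :
    ∀ m : ℝ, 0 ≤ m → m ≤ n →
      ∫⁻ α, ENNReal.ofReal
        ((Real.exp (l α) * gaussDensity μ Q α / gaussDensity μs Qs α) ^ m *
          gaussDensity μs Qs α) < ⊤ := by
  intro m hm hmn
  set Z : ℝ := (2 * Real.pi) ^ (-(d : ℝ) / 2)
  have hZs : 0 < Z * Real.sqrt Qs.det := mul_pos (by positivity) (Real.sqrt_pos.2 hQs.det_pos)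
  obtain ⟨a, b, hexp⟩ := exists_le_affine_sub_half_dotProduct_mulVec hbound μ μs Q Qs hm
  refine lintegral_ofReal_lt_top_of_le_mul_exp (hQs.sub_smul_sub_of_le hn hpd hm hmn)
    (C := (Z * Real.sqrt Q.det / (Z * Real.sqrt Qs.det)) ^ m * (Z * Real.sqrt Qs.det) *
      Real.exp a) (by positivity) b fun α => ?_
  rw [gaussDensity, gaussDensity, rpow_exp_mul_div_mul_exp_mul_eq (by positivity) hZs,
    mul_assoc _ (Real.exp a), ← Real.exp_add, ← add_sub_assoc]
  gcongr
  exact hexp α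

theorem stmt1 (d : ℕ) (hd : 1 ≤ d) (l : (Fin d → ℝ) → ℝ) (hl : Measurable l)
    (k : ℝ) (δ : Fin d → ℝ) (hbound : ∀ α, l α ≤ k + δ ⬝ᵥ α)
    (μ μs : Fin d → ℝ) (Q Qs : Matrix (Fin d) (Fin d) ℝ)
    (hQ : Q.PosDef) (hQs : Qs.PosDef)
    (n : ℝ) (hn : 0 < n)
    (hpd : (Qs - n • (Qs - Q)).PosDef) :
    ∀ m : ℝ, 0 ≤ m → m ≤ n →
      ∫⁻ α, ENNReal.ofReal
        ((Real.exp (l α) * gaussDensity μ Q α / gaussDensity μs Qs α) ^ m *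
          gaussDensity μs Qs α) < ⊤ :=
  stmt1_general d l k δ hbound μ μs Q Qs hQs n hn hpd
end

section
/- Let d ≥ 1 and let l : ℝ^d → ℝ be measurable. Let p(α) = N(α|μ, Q⁻¹) with Q symmetric positive definite, let g(α) = N(α|μ*, Q*⁻¹) with Q* symmetric positive definite, and define ω(α) = exp(l(α)) p(α) / g(α). Suppose there exist an index j ∈ {1,…,d} and a sign s ∈ {−1,+1} such that for every fixed value of the coordinates α_{−j} = (α_1,…,α_{j−1},α_{j+1},…,α_d), the ratio l(α)/α_j² tends to 0 as s·α_j → +∞. Let n > 0 be a real number. If Q* − n(Q* − Q) ≺ 0 (negative definite), then ∫_{ℝ^d} ω(α)^n g(α) dα = +∞. -/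
/-! Along a line `x + t • eⱼ` the logarithm of `ωⁿ g = exp (n l) pⁿ g¹⁻ⁿ` is `n l` plus a quadratic
in `t` with leading coefficient `((n - 1) Q*ⱼⱼ - n Qⱼⱼ) / 2 = -(Q* - n (Q* - Q))ⱼⱼ / 2 > 0`. As `l`
is `o(t²)` in the direction `s`, the integrand tends to `+∞` there, so every slice integral in the
`j`-th coordinate is infinite, and Tonelli gives `∞`. -/

open MeasureTheory Matrix Filter

open scoped Topology ENNReal

lemma dotProduct_mulVec_update_sub {ι R : Type*} [Fintype ι] [DecidableEq ι] [CommRing R]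
    (M : Matrix ι ι R) (x μ : ι → R) (j : ι) :
    ∃ a b : R, ∀ t : R, (Function.update x j t - μ) ⬝ᵥ M *ᵥ (Function.update x j t - μ)
      = a + b * t + M j j * t ^ 2 := by
  set w := Function.update x j 0 - μ
  set e : ι → R := Pi.single j 1
  have hline : ∀ t, Function.update x j t - μ = w + t • e := by
    intro t
    ext i
    rcases eq_or_ne i j with rfl | hij
    · simp [w, e, sub_eq_neg_add]
    · simp [w, e, hij]
  refine ⟨w ⬝ᵥ M *ᵥ w, w ⬝ᵥ M *ᵥ e + e ⬝ᵥ M *ᵥ w, fun t => ?_⟩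
  have hee : e ⬝ᵥ M *ᵥ e = M j j := by simp [e]
  simp only [hline, mulVec_add, mulVec_smul, dotProduct_add, add_dotProduct, dotProduct_smul,
    smul_dotProduct, smul_eq_mul, hee]
  ring

lemma Real.tendsto_add_quadratic_atTop {h : ℝ → ℝ} {a b c : ℝ}
    (hh : Tendsto (fun t => h t / t ^ 2) atTop (𝓝 0)) (hc : 0 < c) :
    Tendsto (fun t => h t + (a + b * t + c * t ^ 2)) atTop atTop := by
  have hsq : Tendsto (fun t : ℝ => t ^ 2) atTop atTop := tendsto_pow_atTop two_ne_zero
  have hratio : Tendsto (fun t => h t / t ^ 2 + a * (t ^ 2)⁻¹ + b * t⁻¹ + c) atTop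
      (𝓝 (0 + a * 0 + b * 0 + c)) :=
    ((hh.add (hsq.inv_tendsto_atTop.const_mul a)).add
      (tendsto_inv_atTop_zero.const_mul b)).add_const c
  rw [show (0:ℝ) + a * 0 + b * 0 + c = c by ring] at hratio
  refine (hratio.pos_mul_atTop hc hsq).congr' ?_
  filter_upwards [eventually_gt_atTop 0] with t ht
  field_simp
  ring

lemma lintegral_ofReal_eq_top_of_tendsto_atTop {F : ℝ → ℝ} (hF : Tendsto F atTop atTop) :
    ∫⁻ u, ENNReal.ofReal (F u) = ⊤ := by
  obtain ⟨T, hT⟩ := eventually_atTop.1 (hF.eventually_ge_atTop 1)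
  refine top_le_iff.mp ?_
  calc ⊤ = ∫⁻ u, (Set.Ici T).indicator 1 u := by
        rw [lintegral_indicator_one measurableSet_Ici, Real.volume_Ici]
    _ ≤ ∫⁻ u, ENNReal.ofReal (F u) := by
        refine lintegral_mono fun u => ?_
        by_cases hu : u ∈ Set.Ici T
        · simpa [hu] using hT u hu
        · simp [hu]

lemma lintegral_ofReal_eq_top_of_tendsto_comp_mul {F : ℝ → ℝ} {s : ℝ} (hs : s = 1 ∨ s = -1)
    (hF : Tendsto (fun t => F (s * t)) atTop atTop) : ∫⁻ u, ENNReal.ofReal (F u) = ⊤ := by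
  rcases hs with rfl | rfl
  · simpa using lintegral_ofReal_eq_top_of_tendsto_atTop hF
  · rw [← lintegral_neg_eq_self]
    simpa using lintegral_ofReal_eq_top_of_tendsto_atTop hF

lemma lintegral_pi_eq_top_of_lintegral_update_eq_top {ι : Type*} [Fintype ι] [DecidableEq ι]
    {X : ι → Type*} [∀ i, MeasurableSpace (X i)] {μ : ∀ i, Measure (X i)}
    [∀ i, SigmaFinite (μ i)] [∀ i, NeZero (μ i)] {f : (∀ i, X i) → ℝ≥0∞} (hf : Measurable f)
    (j : ι) (h : ∀ x, ∫⁻ y, f (Function.update x j y) ∂μ j = ⊤) :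
    ∫⁻ x, f x ∂Measure.pi μ = ⊤ := by
  have : ∀ i, Nonempty (X i) := fun i => (μ i).nonempty_of_neZero
  rw [lintegral_eq_lmarginal_univ Classical.ofNonempty, lmarginal_erase' f hf (Finset.mem_univ j),
    funext h]
  simp only [lmarginal, lintegral_const, Measure.pi_univ]
  exact ENNReal.top_mul <| Finset.prod_ne_zero_iff.mpr fun i _ =>
    (μ i).measure_univ_ne_zero.mpr (NeZero.ne _)

lemma Real.exp_mul_div_rpow_mul {L p g : ℝ} (n : ℝ) (hp : 0 < p) (hg : 0 < g) :
    (Real.exp L * p / g) ^ n * g = Real.exp (n * L + n * Real.log p + (1 - n) * Real.log g) := by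
  rw [Real.rpow_def_of_pos (by positivity), Real.log_div (by positivity) hg.ne',
    Real.log_mul (Real.exp_pos L).ne' hp.ne', Real.log_exp]
  nth_rewrite 2 [← Real.exp_log hg]
  rw [← Real.exp_add]
  ring_nf

section Gaussian

variable {d : ℕ} (μ : Fin d → ℝ) {P : Matrix (Fin d) (Fin d) ℝ}

lemma gaussDensity_pos (hP : P.PosDef) (α : Fin d → ℝ) : 0 < gaussDensity μ P α := by
  have := hP.det_pos
  unfold gaussDensity
  positivity

lemma continuous_gaussDensity (P : Matrix (Fin d) (Fin d) ℝ) : Continuous (gaussDensity μ P) := by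
  have hsub : Continuous fun α : Fin d → ℝ => α - μ := continuous_id.sub continuous_const
  unfold gaussDensity
  exact continuous_const.mul (Real.continuous_exp.comp
    (continuous_const.mul (hsub.dotProduct (continuous_const.matrix_mulVec hsub))))

lemma exists_log_gaussDensity_update (hP : P.PosDef) (x : Fin d → ℝ) (j : Fin d) :
    ∃ a b : ℝ, ∀ t : ℝ,
      Real.log (gaussDensity μ P (Function.update x j t)) = a + b * t - P j j / 2 * t ^ 2 := by
  obtain ⟨a, b, hq⟩ := dotProduct_mulVec_update_sub P x μ j
  have hC : 0 < (2 * Real.pi) ^ (-(d : ℝ) / 2) * Real.sqrt P.det := by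
    have := hP.det_pos
    positivity
  refine ⟨Real.log ((2 * Real.pi) ^ (-(d : ℝ) / 2) * Real.sqrt P.det) - a / 2, -b / 2,
    fun t => ?_⟩
  unfold gaussDensity
  rw [Real.log_mul hC.ne' (Real.exp_pos _).ne', Real.log_exp, hq]
  ring

end Gaussian

lemma tendsto_importanceWeight_update_atTop {d : ℕ} {l : (Fin d → ℝ) → ℝ} {μ μs : Fin d → ℝ}
    {Q Qs : Matrix (Fin d) (Fin d) ℝ} (hQ : Q.PosDef) (hQs : Qs.PosDef) {n s : ℝ} (hs : s ^ 2 = 1)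
    (x : Fin d → ℝ) {j : Fin d}
    (hl : Tendsto (fun t : ℝ => l (Function.update x j (s * t)) / (s * t) ^ 2) atTop (𝓝 0))
    (hc : 0 < (n - 1) * Qs j j - n * Q j j) :
    Tendsto (fun t : ℝ => (Real.exp (l (Function.update x j (s * t))) *
        gaussDensity μ Q (Function.update x j (s * t)) /
          gaussDensity μs Qs (Function.update x j (s * t))) ^ n *
        gaussDensity μs Qs (Function.update x j (s * t))) atTop atTop := by
  obtain ⟨a, b, hp⟩ := exists_log_gaussDensity_update μ hQ x j
  obtain ⟨as, bs, hg⟩ := exists_log_gaussDensity_update μs hQs x j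
  have hl' : Tendsto (fun t => n * l (Function.update x j (s * t)) / t ^ 2) atTop (𝓝 0) := by
    simpa only [mul_pow, hs, one_mul, mul_div_assoc, mul_zero] using hl.const_mul n
  have hexp := Real.tendsto_add_quadratic_atTop (a := n * a + (1 - n) * as)
    (b := (n * b + (1 - n) * bs) * s) hl' (half_pos hc)
  refine (Real.tendsto_exp_atTop.comp hexp).congr fun t => ?_
  rw [Real.exp_mul_div_rpow_mul n (gaussDensity_pos μ hQ _) (gaussDensity_pos μs hQs _), hp, hg,
    Function.comp_apply]
  congr 1
  linear_combination (n * Q j j + (1 - n) * Qs j j) / 2 * t ^ 2 * hs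

theorem stmt2_general (d : ℕ) (l : (Fin d → ℝ) → ℝ) (hl : Measurable l)
    (μ μs : Fin d → ℝ) (Q Qs : Matrix (Fin d) (Fin d) ℝ)
    (hQ : Q.PosDef) (hQs : Qs.PosDef)
    (hlim : ∃ (j : Fin d) (s : ℝ), (s = 1 ∨ s = -1) ∧
      ∀ α : Fin d → ℝ,
        Tendsto (fun t : ℝ => l (Function.update α j (s * t)) / (s * t) ^ 2)
          atTop (nhds 0))
    (n : ℝ)
    (hnd : (-(Qs - n • (Qs - Q))).PosDef) :
    ∫⁻ α, ENNReal.ofReal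
      ((Real.exp (l α) * gaussDensity μ Q α / gaussDensity μs Qs α) ^ n *
        gaussDensity μs Qs α) = ⊤ := by
  obtain ⟨j, s, hs, hlim⟩ := hlim
  have hc : 0 < (n - 1) * Qs j j - n * Q j j := by
    have := hnd.diag_pos (i := j)
    simp only [Matrix.neg_apply, Matrix.sub_apply, Matrix.smul_apply, smul_eq_mul] at this
    linarith
  have hp := (continuous_gaussDensity μ Q).measurable
  have hg := (continuous_gaussDensity μs Qs).measurable
  have hmeas := (((((Real.measurable_exp.comp hl).mul hp).div hg).pow_const n).mul
    hg).ennreal_ofReal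
  rw [volume_pi]
  refine lintegral_pi_eq_top_of_lintegral_update_eq_top hmeas j fun x => ?_
  have hs2 : s ^ 2 = 1 := by rcases hs with rfl | rfl <;> norm_num
  exact lintegral_ofReal_eq_top_of_tendsto_comp_mul hs
    (tendsto_importanceWeight_update_atTop hQ hQs hs2 x (hlim x) hc)

theorem stmt2 (d : ℕ) (hd : 1 ≤ d) (l : (Fin d → ℝ) → ℝ) (hl : Measurable l)
    (μ μs : Fin d → ℝ) (Q Qs : Matrix (Fin d) (Fin d) ℝ)
    (hQ : Q.PosDef) (hQs : Qs.PosDef)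
    (hlim : ∃ (j : Fin d) (s : ℝ), (s = 1 ∨ s = -1) ∧
      ∀ α : Fin d → ℝ,
        Tendsto (fun t : ℝ => l (Function.update α j (s * t)) / (s * t) ^ 2)
          atTop (nhds 0))
    (n : ℝ) (hn : 0 < n)
    (hnd : (-(Qs - n • (Qs - Q))).PosDef) :
    ∫⁻ α, ENNReal.ofReal
      ((Real.exp (l α) * gaussDensity μ Q α / gaussDensity μs Qs α) ^ n *
        gaussDensity μs Qs α) = ⊤ :=
  stmt2_general d l hl μ μs Q Qs hQ hQs hlim n hnd
end

section
/- Let d ≥ 1 and let f : ℝ^d → [0,∞) be measurable, and let g₁ and g₂ be probability densities on ℝ^d (nonnegative measurable functions integrating to 1 with respect to Lebesgue measure). Assume the support condition {α : f(α) ≠ 0} ⊆ {α : g₁(α) ≠ 0}, and assume that for some real n ≥ 1 the integral ∫_{{g₁ > 0}} (f(α)/g₁(α))^n g₁(α) dα is finite. Let 0 < π < 1 and define the mixture density g(α) = π g₁(α) + (1−π) g₂(α). Then for every real m with 1 ≤ m ≤ n, the integral ∫_{{g > 0}} (f(α)/g(α))^m g(α) dα is finite. -/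
/-! Write `g = π g₁ + (1 - π) g₂`. For `m ≥ 1` the perspective `(a / c) ^ m * c = a ^ m * c ^ (1 - m)`
is antitone in `c`, and `g ≥ π g₁`, so pointwise
`(f / g) ^ m g ≤ π ^ (1 - m) (f / g₁) ^ m g₁ ≤ π ^ (1 - m) ((f / g₁) ^ n g₁ + g₁)`,
using `x ^ m ≤ x ^ n + 1` for `x ≥ 0`. The right-hand side has finite integral. -/

open MeasureTheory

namespace Real

lemma div_rpow_mul_eq {a c : ℝ} (ha : 0 ≤ a) (hc : 0 < c) (m : ℝ) :
    (a / c) ^ m * c = a ^ m * c ^ (1 - m) := by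
  rw [div_rpow ha hc.le, rpow_sub hc, rpow_one, div_mul_eq_mul_div, mul_div_assoc]

lemma div_rpow_mul_le_of_le {a b c m : ℝ} (ha : 0 ≤ a) (hb : 0 < b) (hbc : b ≤ c)
    (hm : 1 ≤ m) : (a / c) ^ m * c ≤ (a / b) ^ m * b := by
  rw [div_rpow_mul_eq ha (hb.trans_le hbc), div_rpow_mul_eq ha hb]
  exact mul_le_mul_of_nonneg_left (rpow_le_rpow_of_nonpos hb hbc (by linarith))
    (rpow_nonneg ha m)

lemma div_rpow_mul_const_mul {a b t : ℝ} (ha : 0 ≤ a) (hb : 0 < b) (ht : 0 < t) (m : ℝ) :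
    (a / (t * b)) ^ m * (t * b) = t ^ (1 - m) * ((a / b) ^ m * b) := by
  rw [div_rpow_mul_eq ha (mul_pos ht hb), div_rpow_mul_eq ha hb, mul_rpow ht.le hb.le]
  ring

lemma rpow_le_rpow_add_one {x m n : ℝ} (hx : 0 ≤ x) (hm : 0 ≤ m) (hmn : m ≤ n) :
    x ^ m ≤ x ^ n + 1 := by
  rcases le_total x 1 with h | h
  · linarith [rpow_le_one hx h hm, rpow_nonneg hx n]
  · linarith [rpow_le_rpow_of_exponent_le h hmn]

lemma div_rpow_mul_le_of_const_mul_le {a b c t m n : ℝ} (ha : 0 ≤ a) (hb : 0 ≤ b) (ht : 0 < t)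
    (hbc : t * b ≤ c) (hab : a ≠ 0 → b ≠ 0) (hm : 1 ≤ m) (hmn : m ≤ n) :
    (a / c) ^ m * c ≤ t ^ (1 - m) * ((a / b) ^ n * b + b) := by
  rcases eq_or_ne a 0 with rfl | ha0
  · rw [zero_div, zero_rpow (by linarith), zero_mul]
    positivity
  have hb0 : 0 < b := (hab ha0).lt_of_le' hb
  calc (a / c) ^ m * c ≤ (a / (t * b)) ^ m * (t * b) :=
        div_rpow_mul_le_of_le ha (mul_pos ht hb0) hbc hm
    _ = t ^ (1 - m) * ((a / b) ^ m * b) := div_rpow_mul_const_mul ha hb0 ht m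
    _ ≤ t ^ (1 - m) * (((a / b) ^ n + 1) * b) := by
        gcongr
        exact rpow_le_rpow_add_one (by positivity) (by linarith) hmn
    _ = t ^ (1 - m) * ((a / b) ^ n * b + b) := by ring

end Real

section Mixture

variable {X : Type*} [MeasurableSpace X] {μ : Measure X} {f g₁ g₂ : X → ℝ}

lemma lintegral_rpow_div_mixture_le (hf0 : ∀ x, 0 ≤ f x) (hg₁0 : ∀ x, 0 ≤ g₁ x)
    (hg₂0 : ∀ x, 0 ≤ g₂ x) (hsupp : {x | f x ≠ 0} ⊆ {x | g₁ x ≠ 0})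
    (hg₁ : AEMeasurable g₁ μ) {π m n : ℝ} (hπ0 : 0 < π) (hπ1 : π < 1) (hm : 1 ≤ m)
    (hmn : m ≤ n) :
    ∫⁻ x in {x | 0 < π * g₁ x + (1 - π) * g₂ x},
        ENNReal.ofReal ((f x / (π * g₁ x + (1 - π) * g₂ x)) ^ m *
          (π * g₁ x + (1 - π) * g₂ x)) ∂μ ≤
      ENNReal.ofReal (π ^ (1 - m)) *
        (∫⁻ x in {x | 0 < g₁ x}, ENNReal.ofReal ((f x / g₁ x) ^ n * g₁ x) ∂μ +
          ∫⁻ x, ENNReal.ofReal (g₁ x) ∂μ) := by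
  have hpointwise : ∀ x,
      ENNReal.ofReal ((f x / (π * g₁ x + (1 - π) * g₂ x)) ^ m * (π * g₁ x + (1 - π) * g₂ x)) ≤
        ENNReal.ofReal (π ^ (1 - m)) *
          (ENNReal.ofReal ((f x / g₁ x) ^ n * g₁ x) + ENNReal.ofReal (g₁ x)) := fun x => by
    rw [← ENNReal.ofReal_add (by have := hf0 x; have := hg₁0 x; positivity) (hg₁0 x),
      ← ENNReal.ofReal_mul (by positivity)]
    refine ENNReal.ofReal_le_ofReal
      (Real.div_rpow_mul_le_of_const_mul_le (hf0 x) (hg₁0 x) hπ0 ?_ (@hsupp x) hm hmn)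
    nlinarith [hg₁0 x, hg₂0 x]
  have hsupport : (fun x => ENNReal.ofReal ((f x / g₁ x) ^ n * g₁ x)).support ⊆
      {x | 0 < g₁ x} := fun x hx => by
    refine (hg₁0 x).lt_of_ne' fun h => hx ?_
    simp [h]
  calc _ ≤ ∫⁻ x, ENNReal.ofReal (π ^ (1 - m)) *
          (ENNReal.ofReal ((f x / g₁ x) ^ n * g₁ x) + ENNReal.ofReal (g₁ x)) ∂μ :=
        (setLIntegral_le_lintegral _ _).trans (lintegral_mono hpointwise)
    _ = _ := by
        rw [lintegral_const_mul' _ _ ENNReal.ofReal_ne_top,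
          lintegral_add_right' _ hg₁.ennreal_ofReal, setLIntegral_eq_of_support_subset hsupport]

end Mixture

theorem stmt3_general (d : ℕ)
    (f : (Fin d → ℝ) → ℝ) (hf0 : ∀ α, 0 ≤ f α)
    (g₁ g₂ : (Fin d → ℝ) → ℝ)
    (hg₁0 : ∀ α, 0 ≤ g₁ α) (hg₁int : ∫ α, g₁ α = 1)
    (hg₂0 : ∀ α, 0 ≤ g₂ α)
    (hsupp : {α | f α ≠ 0} ⊆ {α | g₁ α ≠ 0})
    (n : ℝ)
    (hfin : ∫⁻ α in {α | 0 < g₁ α},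
      ENNReal.ofReal ((f α / g₁ α) ^ n * g₁ α) < ⊤)
    (π : ℝ) (hπ0 : 0 < π) (hπ1 : π < 1) :
    ∀ m : ℝ, 1 ≤ m → m ≤ n →
      ∫⁻ α in {α | 0 < π * g₁ α + (1 - π) * g₂ α},
        ENNReal.ofReal ((f α / (π * g₁ α + (1 - π) * g₂ α)) ^ m *
          (π * g₁ α + (1 - π) * g₂ α)) < ⊤ := by
  intro m hm hmn
  have hg₁ : Integrable g₁ := .of_integral_ne_zero (by rw [hg₁int]; exact one_ne_zero)
  have hg₁mass : ∫⁻ α, ENNReal.ofReal (g₁ α) = 1 := by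
    rw [← ofReal_integral_eq_lintegral_ofReal hg₁ (ae_of_all _ hg₁0), hg₁int, ENNReal.ofReal_one]
  refine (lintegral_rpow_div_mixture_le hf0 hg₁0 hg₂0 hsupp hg₁.aemeasurable hπ0 hπ1 hm hmn).trans_lt ?_
  rw [hg₁mass]
  exact ENNReal.mul_lt_top ENNReal.ofReal_lt_top (ENNReal.add_lt_top.mpr ⟨hfin, ENNReal.one_lt_top⟩)

theorem stmt3 (d : ℕ) (hd : 1 ≤ d)
    (f : (Fin d → ℝ) → ℝ) (hf : Measurable f) (hf0 : ∀ α, 0 ≤ f α)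
    (g₁ g₂ : (Fin d → ℝ) → ℝ)
    (hg₁meas : Measurable g₁) (hg₁0 : ∀ α, 0 ≤ g₁ α) (hg₁int : ∫ α, g₁ α = 1)
    (hg₂meas : Measurable g₂) (hg₂0 : ∀ α, 0 ≤ g₂ α) (hg₂int : ∫ α, g₂ α = 1)
    (hsupp : {α | f α ≠ 0} ⊆ {α | g₁ α ≠ 0})
    (n : ℝ) (hn : 1 ≤ n)
    (hfin : ∫⁻ α in {α | 0 < g₁ α},
      ENNReal.ofReal ((f α / g₁ α) ^ n * g₁ α) < ⊤)
    (π : ℝ) (hπ0 : 0 < π) (hπ1 : π < 1) :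
    ∀ m : ℝ, 1 ≤ m → m ≤ n →
      ∫⁻ α in {α | 0 < π * g₁ α + (1 - π) * g₂ α},
        ENNReal.ofReal ((f α / (π * g₁ α + (1 - π) * g₂ α)) ^ m *
          (π * g₁ α + (1 - π) * g₂ α)) < ⊤ :=
  stmt3_general d f hf0 g₁ g₂ hg₁0 hg₁int hg₂0 hsupp n hfin π hπ0 hπ1
end

section
/- Let T ≥ 2, let φ ∈ ℝ with 0 < |φ| < 1, let σ > 0, let n ≥ 1 be real, and let v > 0 satisfy v ≥ (n−1)σ²/(1−|φ|)². Then the T×T symmetric tridiagonal matrix M with diagonal entries M_{11} = M_{TT} = σ⁻²(1 − (n−1)σ²/v), M_{tt} = σ⁻²(1 + φ² − (n−1)σ²/v) for 2 ≤ t ≤ T−1, off-diagonal entries M_{t,t+1} = M_{t+1,t} = −φ/σ², and all other entries zero, is positive definite. -/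
/-!
Write `a = |φ|` and `φ = a s` with `s² = 1`. Up to the factor `σ⁻²`, the quadratic form of `M` is
`Q(x) - c ‖x‖²` with `c = (n - 1) σ² / v ≤ (1 - a)²`, where `Q` is the quadratic form of the
AR(1) precision matrix. Completing squares along the path gives
`Q(x) = (1 - a)² ‖x‖² + a (1 - a) (x₀² + x_{T-1}²) + a ∑ₜ (xₜ - s xₜ₊₁)²`,
and the last two terms vanish only at `x = 0`, so `Q(x) > (1 - a)² ‖x‖² ≥ c ‖x‖²`.
-/

open Matrix

section SymmTridiag

variable {R : Type*}

def symmTridiag {T : ℕ} [Zero R] (d : Fin T → R) (e : R) : Matrix (Fin T) (Fin T) R :=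
  of fun i j => if i = j then d i else if i.val + 1 = j.val ∨ j.val + 1 = i.val then e else 0

theorem symmTridiag_isSymm {T : ℕ} [Zero R] (d : Fin T → R) (e : R) :
    (symmTridiag d e).IsSymm := by
  ext i j
  simp only [symmTridiag, transpose_apply, of_apply, eq_comm, or_comm]
  split_ifs with h <;> simp [h]

theorem sum_sum_ite_val_add_one_eq {M : Type*} [AddCommMonoid M] {L : ℕ}
    (f : Fin (L + 1) → Fin (L + 1) → M) :
    ∑ i, ∑ j, (if i.val + 1 = j.val then f i j else 0) = ∑ t : Fin L, f t.castSucc t.succ := by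
  rw [Finset.sum_comm, Fin.sum_univ_succ]
  have hiff : ∀ (t : Fin L) (i : Fin (L + 1)), i.val + 1 = t.succ.val ↔ t.castSucc = i := by
    intro t i; rw [Fin.val_succ, Fin.ext_iff, Fin.val_castSucc]; omega
  simp only [hiff, Fin.val_zero, Nat.add_one_ne_zero, if_false, Finset.sum_const_zero, zero_add,
    Finset.sum_ite_eq, Finset.mem_univ, if_true]

theorem dotProduct_symmTridiag_mulVec [CommRing R] {L : ℕ} (d : Fin (L + 1) → R) (e : R)
    (x : Fin (L + 1) → R) :
    x ⬝ᵥ symmTridiag d e *ᵥ x =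
      ∑ i, d i * x i ^ 2 + 2 * e * ∑ t : Fin L, x t.castSucc * x t.succ := by
  have hentry : ∀ i j, x i * (symmTridiag d e i j * x j) =
      (if i = j then d i * x i ^ 2 else 0) +
        e * ((if i.val + 1 = j.val then x i * x j else 0) +
          (if j.val + 1 = i.val then x j * x i else 0)) := by
    intro i j
    simp only [symmTridiag, of_apply]
    by_cases hij : i = j
    · subst hij
      simp only [if_true, Nat.succ_ne_self, if_false]
      ring
    · have : i.val ≠ j.val := Fin.val_ne_of_ne hij
      split_ifs <;> first | omega | ring
  have hsub : ∑ i, ∑ j, (if j.val + 1 = i.val then x j * x i else 0) =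
      ∑ t : Fin L, x t.castSucc * x t.succ := by
    rw [Finset.sum_comm]; exact sum_sum_ite_val_add_one_eq fun i j => x i * x j
  simp only [dotProduct, mulVec, Finset.mul_sum, hentry]
  simp only [Finset.sum_add_distrib, ← Finset.mul_sum, Finset.sum_ite_eq, Finset.mem_univ, if_true,
    sum_sum_ite_val_add_one_eq, hsub]
  ring

theorem sum_ite_endpoints_mul [CommRing R] {L : ℕ} (hL : L ≠ 0) (A B : R)
    (y : Fin (L + 1) → R) :
    ∑ i, (if i.val = 0 ∨ i.val = L then A else B) * y i =
      B * ∑ i, y i + (A - B) * (y 0 + y (Fin.last L)) := by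
  have hpoint : ∀ i : Fin (L + 1), (if i.val = 0 ∨ i.val = L then A else B) * y i =
      B * y i + (A - B) * ((if i = 0 then y i else 0) + (if i = Fin.last L then y i else 0)) := by
    intro i
    simp only [Fin.ext_iff, Fin.val_zero, Fin.val_last]
    split_ifs <;> first | omega | ring
  simp only [hpoint, Finset.sum_add_distrib, ← Finset.mul_sum, Finset.sum_ite_eq', Finset.mem_univ,
    if_true]

end SymmTridiag

theorem Fin.eq_zero_of_succ_eq_mul {R : Type*} [MulZeroClass R] {L : ℕ} {x : Fin (L + 1) → R}
    (c : R) (h0 : x 0 = 0) (hsucc : ∀ t : Fin L, x t.succ = c * x t.castSucc) : x = 0 := by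
  funext i
  induction i using Fin.induction with
  | zero => exact h0
  | succ t ih =>
    rw [Pi.zero_apply] at ih ⊢
    rw [hsucc, ih, mul_zero]

section AR1

variable {L : ℕ}

/-- `σ²` times the quadratic form of the precision matrix of a stationary AR(1) process with
coefficient `φ` and innovation variance `σ²`, observed at `L + 1` consecutive times. -/
def ar1Form (φ : ℝ) (x : Fin (L + 1) → ℝ) : ℝ :=
  (1 + φ ^ 2) * ∑ i, x i ^ 2 - φ ^ 2 * (x 0 ^ 2 + x (Fin.last L) ^ 2) -
    2 * φ * ∑ t : Fin L, x t.castSucc * x t.succ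

theorem ar1Form_mul_eq {a s : ℝ} (hs : s ^ 2 = 1) (x : Fin (L + 1) → ℝ) :
    ar1Form (a * s) x = (1 - a) ^ 2 * ∑ i, x i ^ 2 + a * (1 - a) * (x 0 ^ 2 + x (Fin.last L) ^ 2) +
      a * ∑ t : Fin L, (x t.castSucc - s * x t.succ) ^ 2 := by
  have hinit : ∑ t : Fin L, x t.castSucc ^ 2 = ∑ i, x i ^ 2 - x (Fin.last L) ^ 2 := by
    rw [Fin.sum_univ_castSucc]; ring
  have htail : ∑ t : Fin L, x t.succ ^ 2 = ∑ i, x i ^ 2 - x 0 ^ 2 := by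
    rw [Fin.sum_univ_succ]; ring
  have hexpand : ∑ t : Fin L, (x t.castSucc - s * x t.succ) ^ 2 =
      ∑ t : Fin L, x t.castSucc ^ 2 + ∑ t : Fin L, x t.succ ^ 2 -
        2 * s * ∑ t : Fin L, x t.castSucc * x t.succ := by
    simp only [Finset.mul_sum, ← Finset.sum_add_distrib, ← Finset.sum_sub_distrib]
    refine Finset.sum_congr rfl fun t _ => ?_
    linear_combination x t.succ ^ 2 * hs
  rw [hexpand, hinit, htail, ar1Form]
  linear_combination (a ^ 2 * ∑ i, x i ^ 2 - a ^ 2 * (x 0 ^ 2 + x (Fin.last L) ^ 2)) * hs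

theorem endpoints_add_sum_sq_sub_mul_pos {a s : ℝ} (ha0 : 0 < a) (ha1 : a < 1) (hs : s ^ 2 = 1)
    {x : Fin (L + 1) → ℝ} (hx : x ≠ 0) :
    0 < a * (1 - a) * (x 0 ^ 2 + x (Fin.last L) ^ 2) +
      a * ∑ t : Fin L, (x t.castSucc - s * x t.succ) ^ 2 := by
  have hends : 0 ≤ x 0 ^ 2 + x (Fin.last L) ^ 2 := by positivity
  have hsquares : 0 ≤ ∑ t : Fin L, (x t.castSucc - s * x t.succ) ^ 2 := by positivity
  have ha : 0 < a * (1 - a) := mul_pos ha0 (sub_pos.mpr ha1)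
  by_cases h0 : x 0 = 0
  · have hjump : ∃ t : Fin L, x t.castSucc - s * x t.succ ≠ 0 := by
      by_contra! hnone
      refine hx (Fin.eq_zero_of_succ_eq_mul s h0 fun t => ?_)
      linear_combination -s * hnone t - x t.succ * hs
    obtain ⟨t, ht⟩ := hjump
    have hsquares_pos : 0 < ∑ t : Fin L, (x t.castSucc - s * x t.succ) ^ 2 :=
      Finset.sum_pos' (fun _ _ => sq_nonneg _) ⟨t, Finset.mem_univ _, by positivity⟩
    exact add_pos_of_nonneg_of_pos (mul_nonneg ha.le hends) (mul_pos ha0 hsquares_pos)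
  · have hends_pos : 0 < x 0 ^ 2 + x (Fin.last L) ^ 2 := by positivity
    exact add_pos_of_pos_of_nonneg (mul_pos ha hends_pos) (mul_nonneg ha0.le hsquares)

theorem sq_one_sub_abs_mul_sum_sq_lt_ar1Form {φ : ℝ} (hφ0 : φ ≠ 0) (hφ1 : |φ| < 1)
    {x : Fin (L + 1) → ℝ} (hx : x ≠ 0) : (1 - |φ|) ^ 2 * ∑ i, x i ^ 2 < ar1Form φ x := by
  set s := φ / |φ|
  have ha0 : 0 < |φ| := abs_pos.mpr hφ0
  have hs : s ^ 2 = 1 := by rw [div_pow, sq_abs, div_self (pow_ne_zero 2 hφ0)]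
  have hφ : φ = |φ| * s := (mul_div_cancel₀ φ ha0.ne').symm
  have key := ar1Form_mul_eq (a := |φ|) hs x
  rw [← hφ] at key
  rw [key, add_assoc, lt_add_iff_pos_right]
  exact endpoints_add_sum_sq_sub_mul_pos ha0 hφ1 hs hx

end AR1

theorem stmt5_general (T : ℕ) (hT : 2 ≤ T) (φ : ℝ) (hφ0 : φ ≠ 0) (hφ1 : |φ| < 1)
    (σ : ℝ) (hσ : 0 < σ) (n : ℝ)
    (v : ℝ) (hv : 0 < v) (hvge : (n - 1) * σ ^ 2 / (1 - |φ|) ^ 2 ≤ v)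
    (M : Matrix (Fin T) (Fin T) ℝ)
    (hM : M = Matrix.of fun i j =>
      if i = j then
        (if i.val = 0 ∨ i.val = T - 1 then σ⁻¹ ^ 2 * (1 - (n - 1) * σ ^ 2 / v)
         else σ⁻¹ ^ 2 * (1 + φ ^ 2 - (n - 1) * σ ^ 2 / v))
      else if i.val + 1 = j.val ∨ j.val + 1 = i.val then -φ / σ ^ 2
      else 0) :
    M.PosDef := by
  obtain ⟨L, rfl⟩ : ∃ L, T = L + 1 := ⟨T - 1, by omega⟩
  set c := (n - 1) * σ ^ 2 / v
  have hc : c ≤ (1 - |φ|) ^ 2 := by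
    rw [div_le_iff₀ (pow_pos (sub_pos.mpr hφ1) 2)] at hvge
    rw [div_le_iff₀ hv]; linarith
  subst hM
  change (symmTridiag _ _).PosDef
  rw [posDef_iff_dotProduct_mulVec]
  refine ⟨isHermitian_iff_isSymm.mpr (symmTridiag_isSymm _ _), fun x hx => ?_⟩
  rw [star_trivial, dotProduct_symmTridiag_mulVec, Nat.add_sub_cancel,
    sum_ite_endpoints_mul (by omega)]
  have hform : σ⁻¹ ^ 2 * (1 + φ ^ 2 - c) * ∑ i, x i ^ 2 +
      (σ⁻¹ ^ 2 * (1 - c) - σ⁻¹ ^ 2 * (1 + φ ^ 2 - c)) * (x 0 ^ 2 + x (Fin.last L) ^ 2) +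
      2 * (-φ / σ ^ 2) * ∑ t : Fin L, x t.castSucc * x t.succ =
      σ⁻¹ ^ 2 * (ar1Form φ x - c * ∑ i, x i ^ 2) := by
    rw [ar1Form]; ring
  rw [hform]
  have hlt := sq_one_sub_abs_mul_sum_sq_lt_ar1Form hφ0 hφ1 hx
  have hle : c * ∑ i, x i ^ 2 ≤ (1 - |φ|) ^ 2 * ∑ i, x i ^ 2 :=
    mul_le_mul_of_nonneg_right hc (by positivity)
  exact mul_pos (by positivity) (by linarith)

theorem stmt5 (T : ℕ) (hT : 2 ≤ T) (φ : ℝ) (hφ0 : φ ≠ 0) (hφ1 : |φ| < 1)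
    (σ : ℝ) (hσ : 0 < σ) (n : ℝ) (hn : 1 ≤ n)
    (v : ℝ) (hv : 0 < v) (hvge : (n - 1) * σ ^ 2 / (1 - |φ|) ^ 2 ≤ v)
    (M : Matrix (Fin T) (Fin T) ℝ)
    (hM : M = Matrix.of fun i j =>
      if i = j then
        (if i.val = 0 ∨ i.val = T - 1 then σ⁻¹ ^ 2 * (1 - (n - 1) * σ ^ 2 / v)
         else σ⁻¹ ^ 2 * (1 + φ ^ 2 - (n - 1) * σ ^ 2 / v))
      else if i.val + 1 = j.val ∨ j.val + 1 = i.val then -φ / σ ^ 2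
      else 0) :
    M.PosDef :=
  stmt5_general T hT φ hφ0 hφ1 σ hσ n v hv hvge M hM
end

section
/- Let φ ∈ ℝ with 0 < |φ| < 1 and let c ∈ ℝ with c > 2|φ|. Define the sequence (Λ_t)_{t≥0} by Λ_0 = 1, Λ_1 = c − φ², and Λ_t = c Λ_{t−1} − φ² Λ_{t−2} for t ≥ 2. Then Λ_t > 0 for every t ≥ 0, and moreover Λ_T − φ² Λ_{T−1} > 0 for every T ≥ 1. -/
/-!
For a second-order recurrence `u (t + 2) = c * u (t + 1) - a ^ 2 * u t` with `0 ≤ a` and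
`2 * a < c`, the ratio `u (t + 1) / u t` stays above `a` once it starts there: from
`a * u t < u (t + 1)` one gets `a ^ 2 * u t ≤ a * u (t + 1) < (c - a) * u (t + 1)`, which is
`a * u (t + 1) < u (t + 2)`. With `a = |φ| < 1` this also gives
`Λ T - φ ^ 2 * Λ (T - 1) > |φ| * (1 - |φ|) * Λ (T - 1) ≥ 0`.
-/

section Recurrence

variable {a c : ℝ} {u : ℕ → ℝ}

theorem pos_and_mul_lt_succ_of_recurrence (ha : 0 ≤ a) (hc : 2 * a < c)
    (hu : ∀ t, u (t + 2) = c * u (t + 1) - a ^ 2 * u t) (h0 : 0 < u 0) (h1 : a * u 0 < u 1) :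
    ∀ t, 0 < u t ∧ a * u t < u (t + 1) := by
  intro t
  induction t with
  | zero => exact ⟨h0, h1⟩
  | succ t ih =>
    obtain ⟨hpos, hlt⟩ := ih
    have hpos' : 0 < u (t + 1) := (mul_nonneg ha hpos.le).trans_lt hlt
    refine ⟨hpos', ?_⟩
    have hsq : a ^ 2 * u t ≤ a * u (t + 1) := by
      rw [pow_two, mul_assoc]
      exact mul_le_mul_of_nonneg_left hlt.le ha
    have hgap : a * u (t + 1) < (c - a) * u (t + 1) :=
      mul_lt_mul_of_pos_right (by linarith) hpos'
    rw [hu]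
    linarith

theorem sub_sq_mul_pos_of_recurrence (ha : 0 ≤ a) (ha1 : a < 1) (hc : 2 * a < c)
    (hu : ∀ t, u (t + 2) = c * u (t + 1) - a ^ 2 * u t) (h0 : 0 < u 0) (h1 : a * u 0 < u 1)
    (t : ℕ) : 0 < u (t + 1) - a ^ 2 * u t := by
  obtain ⟨hpos, hlt⟩ := pos_and_mul_lt_succ_of_recurrence ha hc hu h0 h1 t
  have hgap : 0 ≤ a * (1 - a) * u t := by
    have : 0 ≤ 1 - a := by linarith
    positivity
  linarith

end Recurrence

theorem stmt8_general (φ : ℝ) (hφ1 : |φ| < 1)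
    (c : ℝ) (hc : 2 * |φ| < c)
    (Λ : ℕ → ℝ) (hΛ0 : Λ 0 = 1) (hΛ1 : Λ 1 = c - φ ^ 2)
    (hΛ : ∀ t, 2 ≤ t → Λ t = c * Λ (t - 1) - φ ^ 2 * Λ (t - 2)) :
    (∀ t : ℕ, 0 < Λ t) ∧ (∀ T : ℕ, 1 ≤ T → 0 < Λ T - φ ^ 2 * Λ (T - 1)) := by
  rw [← sq_abs φ] at hΛ1 hΛ ⊢
  have ha := abs_nonneg φ
  have hrec : ∀ t, Λ (t + 2) = c * Λ (t + 1) - |φ| ^ 2 * Λ t := fun t => hΛ (t + 2) (by omega)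
  have h0 : 0 < Λ 0 := by rw [hΛ0]; norm_num
  have h1 : |φ| * Λ 0 < Λ 1 := by rw [hΛ0, hΛ1]; nlinarith
  refine ⟨fun t => (pos_and_mul_lt_succ_of_recurrence ha hc hrec h0 h1 t).1, fun T hT => ?_⟩
  obtain ⟨t, rfl⟩ : ∃ t, T = t + 1 := ⟨T - 1, by omega⟩
  exact sub_sq_mul_pos_of_recurrence ha hφ1 hc hrec h0 h1 t

theorem stmt8 (φ : ℝ) (hφ0 : 0 < |φ|) (hφ1 : |φ| < 1)
    (c : ℝ) (hc : 2 * |φ| < c)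
    (Λ : ℕ → ℝ) (hΛ0 : Λ 0 = 1) (hΛ1 : Λ 1 = c - φ ^ 2)
    (hΛ : ∀ t, 2 ≤ t → Λ t = c * Λ (t - 1) - φ ^ 2 * Λ (t - 2)) :
    (∀ t : ℕ, 0 < Λ t) ∧ (∀ T : ℕ, 1 ≤ T → 0 < Λ T - φ ^ 2 * Λ (T - 1)) :=
  stmt8_general φ hφ1 c hc Λ hΛ0 hΛ1 hΛ
end
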